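/- For a three-qubit product state ρ_{ABC} = ρ_A ⊗ ρ_B ⊗ ρ_C, and any choice of local observables M_K^i (K = A,B,C; i = 1,2) whose eigenbases define reference bases, the combination C_{l1}(ρ_{ABC}, M_A^1, M_B^1, M_C^2) + C_{l1}(ρ_{ABC}, M_A^1, M_B^2, M_C^1) + C_{l1}(ρ_{ABC}, M_A^2, M_B^1, M_C^1) − C_{l1}(ρ_{ABC}, M_A^2, M_B^2, M_C^2) is at most 14. -/

import Mathlib

open Matrix Kronecker
open scoped ComplexOrder

/-- The `l₁`-norm of coherence in the standard reference basis. -/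
noncomputable def Cl1 {n : Type*} [Fintype n] (ρ : Matrix n n ℂ) : ℝ :=
  (∑ i, ∑ j, ‖ρ i j‖) - 1

/-- The `l₁`-norm of coherence of `ρ` in the basis described by the unitary `U`
(whose rows are the conjugates of the basis vectors, e.g. the eigenbasis of an
observable): the matrix entries in that basis are those of `U ρ Uᴴ`. -/
noncomputable def Cl1B {n : Type*} [Fintype n] (ρ U : Matrix n n ℂ) : ℝ :=
  Cl1 (U * ρ * Uᴴ)

/-!
Adding one to the `l₁`-coherence makes it multiplicative under tensor products and changes of
local basis, so each of the four terms is `x y z - 1` with every factor `Cl1B ρ_K U + 1` in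
`[1, 2]`: for a qubit, `2 |ρ₀₁| ≤ 2 √(ρ₀₀ ρ₁₁) ≤ ρ₀₀ + ρ₁₁ = 1`. For factors in `[0, 2]`,
each positive product is at most `4` times its second-observable factor, and
`4 (x + y + z) - x y z ≤ 16` on `[0, 2]³`.
-/

variable {m n : Type*} [Fintype m] [Fintype n]

lemma Cl1_kronecker_add_one (A : Matrix m m ℂ) (B : Matrix n n ℂ) :
    Cl1 (A ⊗ₖ B) + 1 = (Cl1 A + 1) * (Cl1 B + 1) := by
  simp only [Cl1, sub_add_cancel, Fintype.sum_mul_sum, Fintype.sum_prod_type, kroneckerMap_apply,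
    norm_mul]

lemma Cl1B_kronecker_add_one (ρ U : Matrix m m ℂ) (σ V : Matrix n n ℂ) :
    Cl1B (ρ ⊗ₖ σ) (U ⊗ₖ V) + 1 = (Cl1B ρ U + 1) * (Cl1B σ V + 1) := by
  rw [Cl1B, conjTranspose_kronecker, ← mul_kronecker_mul, ← mul_kronecker_mul,
    Cl1_kronecker_add_one, Cl1B, Cl1B]

lemma Cl1_nonneg_of_trace_eq_one {ρ : Matrix n n ℂ} (hρ : ρ.trace = 1) : 0 ≤ Cl1 ρ := by
  have hdiag : 1 ≤ ∑ i, ‖ρ i i‖ :=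
    calc 1 = ‖∑ i, ρ i i‖ := by rw [← norm_one (α := ℂ), ← hρ]; rfl
      _ ≤ ∑ i, ‖ρ i i‖ := norm_sum_le _ _
  have hdiag_le : ∑ i, ‖ρ i i‖ ≤ ∑ i, ∑ j, ‖ρ i j‖ :=
    Finset.sum_le_sum fun i _ =>
      Finset.single_le_sum (f := fun j => ‖ρ i j‖) (fun _ _ => norm_nonneg _) (Finset.mem_univ i)
  rw [Cl1]
  linarith

lemma Cl1_le_one_of_posSemidef {ρ : Matrix (Fin 2) (Fin 2) ℂ} (hρ : ρ.PosSemidef)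
    (h1 : ρ.trace = 1) : Cl1 ρ ≤ 1 := by
  have hdiag : ∀ i, 0 ≤ ρ i i := fun _ => hρ.diag_nonneg
  have h10 : ρ 1 0 = star (ρ 0 1) := (hρ.isHermitian.apply 1 0).symm
  have hre : ∀ i, ρ i i = ((ρ i i).re : ℂ) := fun i =>
    Complex.eq_re_of_ofReal_le (r := 0) (by simpa using hdiag i)
  have hnorm : ∀ i, ‖ρ i i‖ = (ρ i i).re := fun i => (Complex.re_eq_norm.mpr (hdiag i)).symm
  set a := (ρ 0 0).re
  set b := (ρ 1 1).re
  set t := ‖ρ 0 1‖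
  have hab : a + b = 1 := by
    rw [trace_fin_two, hre 0, hre 1] at h1
    exact_mod_cast h1
  have hdet : t ^ 2 ≤ a * b := by
    have hdet := hρ.det_nonneg
    rw [det_fin_two, hre 0, hre 1, h10, Complex.star_def, Complex.mul_conj,
      ← Complex.sq_norm] at hdet
    exact_mod_cast sub_nonneg.mp hdet
  have hsum : ∑ i, ∑ j, ‖ρ i j‖ = a + b + 2 * t := by
    simp only [Fin.sum_univ_two, hnorm, h10, norm_star]
    ring
  rw [Cl1, hsum]
  nlinarith [sq_nonneg (a - b)]

lemma trace_unitary_conj [DecidableEq n] {U : Matrix n n ℂ} (hU : U ∈ unitaryGroup n ℂ)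
    (ρ : Matrix n n ℂ) :
    (U * ρ * Uᴴ).trace = ρ.trace := by
  rw [trace_mul_cycle, ← star_eq_conjTranspose, mem_unitaryGroup_iff'.mp hU, one_mul]

lemma Cl1B_mem_Icc {ρ U : Matrix (Fin 2) (Fin 2) ℂ} (hρ : ρ.PosSemidef) (h1 : ρ.trace = 1)
    (hU : U ∈ unitaryGroup (Fin 2) ℂ) : Cl1B ρ U ∈ Set.Icc 0 1 := by
  have h1' : (U * ρ * Uᴴ).trace = 1 := (trace_unitary_conj hU ρ).trans h1
  exact ⟨Cl1_nonneg_of_trace_eq_one h1',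
    Cl1_le_one_of_posSemidef (hρ.mul_mul_conjTranspose_same U) h1'⟩

lemma mul_add_mul_add_mul_sub_mul_le_sixteen {x₁ x₂ y₁ y₂ z₁ z₂ : ℝ}
    (hx₁ : x₁ ∈ Set.Icc 0 2) (hx₂ : x₂ ∈ Set.Icc 0 2)
    (hy₁ : y₁ ∈ Set.Icc 0 2) (hy₂ : y₂ ∈ Set.Icc 0 2)
    (hz₁ : z₁ ∈ Set.Icc 0 2) (hz₂ : z₂ ∈ Set.Icc 0 2) :
    x₁ * y₁ * z₂ + x₁ * y₂ * z₁ + x₂ * y₁ * z₁ - x₂ * y₂ * z₂ ≤ 16 := by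
  obtain ⟨hx₁0, hx₁2⟩ := hx₁
  obtain ⟨hx₂0, hx₂2⟩ := hx₂
  obtain ⟨hy₁0, hy₁2⟩ := hy₁
  obtain ⟨hy₂0, hy₂2⟩ := hy₂
  obtain ⟨hz₁0, hz₁2⟩ := hz₁
  obtain ⟨hz₂0, hz₂2⟩ := hz₂
  have hxy : x₁ * y₁ ≤ 4 := by nlinarith
  have hxz : x₁ * z₁ ≤ 4 := by nlinarith
  have hyz : y₁ * z₁ ≤ 4 := by nlinarith
  have hxy₂ : x₂ * y₂ ≤ 4 := by nlinarith
  calc x₁ * y₁ * z₂ + x₁ * y₂ * z₁ + x₂ * y₁ * z₁ - x₂ * y₂ * z₂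
      ≤ 4 * z₂ + 4 * y₂ + 4 * x₂ - x₂ * y₂ * z₂ := by nlinarith
    _ = 16 - 2 * (2 - x₂) * (2 - y₂) - (2 - z₂) * (4 - x₂ * y₂) := by ring
    _ ≤ 16 := by nlinarith [mul_nonneg (sub_nonneg.2 hx₂2) (sub_nonneg.2 hy₂2)]

theorem stmt_4
    (ρA ρB ρC : Matrix (Fin 2) (Fin 2) ℂ)
    (hA : ρA.PosSemidef) (hA1 : ρA.trace = 1)
    (hB : ρB.PosSemidef) (hB1 : ρB.trace = 1)
    (hC : ρC.PosSemidef) (hC1 : ρC.trace = 1)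
    -- unitaries diagonalizing the observables `M_K^i`, i.e. whose rows form the
    -- eigenbasis of `M_K^i` (any observable eigenbasis arises this way)
    (UA1 UA2 UB1 UB2 UC1 UC2 : Matrix (Fin 2) (Fin 2) ℂ)
    (hUA1 : UA1 ∈ Matrix.unitaryGroup (Fin 2) ℂ)
    (hUA2 : UA2 ∈ Matrix.unitaryGroup (Fin 2) ℂ)
    (hUB1 : UB1 ∈ Matrix.unitaryGroup (Fin 2) ℂ)
    (hUB2 : UB2 ∈ Matrix.unitaryGroup (Fin 2) ℂ)
    (hUC1 : UC1 ∈ Matrix.unitaryGroup (Fin 2) ℂ)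
    (hUC2 : UC2 ∈ Matrix.unitaryGroup (Fin 2) ℂ) :
    Cl1B (ρA ⊗ₖ ρB ⊗ₖ ρC) (UA1 ⊗ₖ UB1 ⊗ₖ UC2)
      + Cl1B (ρA ⊗ₖ ρB ⊗ₖ ρC) (UA1 ⊗ₖ UB2 ⊗ₖ UC1)
      + Cl1B (ρA ⊗ₖ ρB ⊗ₖ ρC) (UA2 ⊗ₖ UB1 ⊗ₖ UC1)
      - Cl1B (ρA ⊗ₖ ρB ⊗ₖ ρC) (UA2 ⊗ₖ UB2 ⊗ₖ UC2) ≤ 14 := by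
  have hmem : ∀ {ρ U : Matrix (Fin 2) (Fin 2) ℂ}, ρ.PosSemidef → ρ.trace = 1 →
      U ∈ unitaryGroup (Fin 2) ℂ → Cl1B ρ U + 1 ∈ Set.Icc (0 : ℝ) 2 := fun hρ h1 hU => by
    obtain ⟨hlow, hupp⟩ := Cl1B_mem_Icc hρ h1 hU
    constructor <;> linarith
  have hprod : ∀ U V W : Matrix (Fin 2) (Fin 2) ℂ, Cl1B (ρA ⊗ₖ ρB ⊗ₖ ρC) (U ⊗ₖ V ⊗ₖ W)
      = (Cl1B ρA U + 1) * (Cl1B ρB V + 1) * (Cl1B ρC W + 1) - 1 := fun U V W => by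
    rw [← Cl1B_kronecker_add_one, ← Cl1B_kronecker_add_one, add_sub_cancel_right]
  have hbound := mul_add_mul_add_mul_sub_mul_le_sixteen (hmem hA hA1 hUA1) (hmem hA hA1 hUA2)
    (hmem hB hB1 hUB1) (hmem hB hB1 hUB2) (hmem hC hC1 hUC1) (hmem hC hC1 hUC2)
  rw [hprod, hprod, hprod, hprod]
  linarith
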